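/- Let x be a reduced quadratic irrational whose sequence of partial quotients (a_n) is purely periodic with minimal period T. Then y = −1/x* (where x* is the algebraic conjugate of x) is also a reduced quadratic irrational, and its sequence of partial quotients (b_n) is the reversed period: for all n ≥ 0, b_n = a_{(T−1−n) mod T}. -/

import Mathlib

/-- The complete quotients of a real number `x`:
`cq x 0 = x` and `cq x (n+1) = 1 / (cq x n - ⌊cq x n⌋)`. -/
noncomputable def cq (x : ℝ) : ℕ → ℝ
  | 0 => x
  | n + 1 => (Int.fract (cq x n))⁻¹

/-- The partial quotients of a real number `x`: `pq x n = ⌊cq x n⌋`. -/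
noncomputable def pq (x : ℝ) (n : ℕ) : ℤ := ⌊cq x n⌋

/-!
The conjugates `x*ₙ` of the complete quotients of a reduced `x` stay in `(-1, 0)` and satisfy
`x*ₙ₊₁ = 1 / (x*ₙ - aₙ)`. Hence `Yₙ = -1/x*ₙ` satisfies `Yₙ₊₁ = aₙ + (-x*ₙ)` with `0 < -x*ₙ < 1`:
the continued fraction algorithm run on `Yₙ₊₁` outputs `aₙ` and moves to `Yₙ`, i.e. it walks the
sequence `Y` backwards. Periodicity of the expansion of `x` gives `x_T = x`, so `x*_T = x*` and
`y = Y_T = Y₀`; the expansion of `y` is therefore `a_{T-1}, …, a₀` repeated.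
-/

open GenContFract

lemma Irrational.fract_ne_zero {z : ℝ} (hz : Irrational z) : Int.fract z ≠ 0 :=
  Int.fract_ne_zero_iff.mpr fun ⟨m, hm⟩ => hz.ne_int m hm.symm

lemma irrational_cq {x : ℝ} (hx : Irrational x) : ∀ n, Irrational (cq x n)
  | 0 => hx
  | n + 1 => ((irrational_cq hx n).sub_intCast ⌊cq x n⌋).inv

lemma cq_add (x : ℝ) (m : ℕ) : ∀ n, cq x (n + m) = cq (cq x m) n
  | 0 => by rw [Nat.zero_add]; rfl
  | n + 1 => by rw [Nat.add_right_comm]; exact congrArg (fun z => (Int.fract z)⁻¹) (cq_add x m n)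

lemma one_lt_cq_succ {x : ℝ} (hx : Irrational x) (n : ℕ) : 1 < cq x (n + 1) :=
  (one_lt_inv₀ ((Int.fract_nonneg _).lt_of_ne (irrational_cq hx n).fract_ne_zero.symm)).mpr
    (Int.fract_lt_one _)

lemma intFractPair_stream_eq {x : ℝ} (hx : Irrational x) :
    ∀ n, IntFractPair.stream x n = some ⟨pq x n, Int.fract (cq x n)⟩
  | 0 => rfl
  | n + 1 => IntFractPair.stream_succ_of_some (intFractPair_stream_eq hx n)
      (irrational_cq hx n).fract_ne_zero

lemma of_eq_of_pq_eq {u w : ℝ} (hu : Irrational u) (hw : Irrational w)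
    (h : ∀ n, pq u n = pq w n) : GenContFract.of u = GenContFract.of w := by
  ext1
  · rw [of_h_eq_floor, of_h_eq_floor]
    exact_mod_cast h 0
  · ext1 n
    rw [get?_of_eq_some_of_succ_get?_intFractPair_stream (intFractPair_stream_eq hu (n + 1)),
      get?_of_eq_some_of_succ_get?_intFractPair_stream (intFractPair_stream_eq hw (n + 1)),
      h (n + 1)]

lemma eq_of_pq_eq {u w : ℝ} (hu : Irrational u) (hw : Irrational w)
    (h : ∀ n, pq u n = pq w n) : u = w :=
  tendsto_nhds_unique (of_eq_of_pq_eq hu hw h ▸ of_convergence u) (of_convergence w)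

lemma cq_eq_self_of_pq_periodic {x : ℝ} (hx : Irrational x) {T : ℕ}
    (hper : ∀ n, pq x (n + T) = pq x n) : cq x T = x :=
  eq_of_pq_eq (irrational_cq hx T) hx fun n => by rw [← hper n, pq, pq, cq_add]

lemma cq_mod_of_cq_eq_self {y : ℝ} {T : ℕ} (h : cq y T = y) (n : ℕ) :
    cq y n = cq y (n % T) := by
  have hmul : ∀ k m, cq y (m + T * k) = cq y m := by
    intro k
    induction k with
    | zero => simp
    | succ k ih => intro m; rw [Nat.mul_succ, ← Nat.add_assoc, cq_add, h, ih]
  rw [← hmul (n / T) (n % T), Nat.mod_add_div]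

lemma cq_eq_of_fract_inv_eq {Y : ℕ → ℝ} (hY : ∀ n, (Int.fract (Y (n + 1)))⁻¹ = Y n)
    (n : ℕ) : ∀ k, cq (Y (n + k)) k = Y n
  | 0 => rfl
  | k + 1 => by
    rw [cq_add _ 1, ← Nat.add_assoc, cq, cq, hY, cq_eq_of_fract_inv_eq hY n k]

lemma irrational_sqrt_of_squarefree {d : ℕ} (hd2 : 2 ≤ d) (hdsf : Squarefree d) :
    Irrational √d := by
  rw [irrational_sqrt_natCast_iff]
  rintro ⟨k, rfl⟩
  have hk : k = 1 := Nat.isUnit_iff.mp (hdsf k dvd_rfl)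
  subst hk
  omega

def IsQuadConj (d : ℕ) (z z' : ℝ) : Prop :=
  ∃ r t : ℚ, z = r + t * √d ∧ z' = r - t * √d

namespace IsQuadConj

variable {d : ℕ} {z z' : ℝ}

lemma symm (h : IsQuadConj d z z') : IsQuadConj d z' z := by
  obtain ⟨r, t, rfl, rfl⟩ := h
  exact ⟨r, -t, by push_cast; ring, by push_cast; ring⟩

lemma neg (h : IsQuadConj d z z') : IsQuadConj d (-z) (-z') := by
  obtain ⟨r, t, rfl, rfl⟩ := h
  exact ⟨-r, -t, by push_cast; ring, by push_cast; ring⟩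

lemma sub_intCast (h : IsQuadConj d z z') (a : ℤ) : IsQuadConj d (z - a) (z' - a) := by
  obtain ⟨r, t, rfl, rfl⟩ := h
  exact ⟨r - a, t, by push_cast; ring, by push_cast; ring⟩

lemma inv (h : IsQuadConj d z z') (hz : z ≠ 0) (hz' : z' ≠ 0) :
    IsQuadConj d z⁻¹ z'⁻¹ := by
  obtain ⟨r, t, rfl, rfl⟩ := h
  have hnorm : ((r ^ 2 - t ^ 2 * d : ℚ) : ℝ) = (r + t * √d) * (r - t * √d) := by
    push_cast
    linear_combination (t : ℝ) ^ 2 * Real.sq_sqrt (Nat.cast_nonneg d)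
  refine ⟨r / (r ^ 2 - t ^ 2 * d), -t / (r ^ 2 - t ^ 2 * d), ?_, ?_⟩
  all_goals
    rw [Rat.cast_div, Rat.cast_div, hnorm]
    field_simp
    push_cast
    ring

lemma eq_of_irrational (hd : Irrational √d) {z₁ z₂ : ℝ} (h₁ : IsQuadConj d z z₁)
    (h₂ : IsQuadConj d z z₂) : z₁ = z₂ := by
  obtain ⟨r₁, t₁, rfl, rfl⟩ := h₁
  obtain ⟨r₂, t₂, h, rfl⟩ := h₂
  obtain rfl : t₁ = t₂ := by
    by_contra ht
    have ht' : (t₁ : ℝ) - t₂ ≠ 0 := sub_ne_zero.mpr (Rat.cast_injective.ne ht)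
    refine hd ⟨(r₂ - r₁) / (t₁ - t₂), ?_⟩
    push_cast
    field_simp
    linarith
  linarith

end IsQuadConj

def IsReducedConj (d : ℕ) (z z' : ℝ) : Prop :=
  IsQuadConj d z z' ∧ 1 < z ∧ -1 < z' ∧ z' < 0

namespace IsReducedConj

variable {d : ℕ} {z z' : ℝ}

lemma fract_inv (h : IsReducedConj d z z') (hz : Irrational z) :
    IsReducedConj d (Int.fract z)⁻¹ (z' - ⌊z⌋)⁻¹ := by
  obtain ⟨hconj, hz1, hz'1, hz'0⟩ := h
  have hfloor : (1 : ℝ) ≤ ⌊z⌋ := by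
    exact_mod_cast Int.le_floor.mpr (by exact_mod_cast hz1.le)
  have hlt : z' - ⌊z⌋ < -1 := by linarith
  refine ⟨(hconj.sub_intCast ⌊z⌋).inv hz.fract_ne_zero (by linarith), one_lt_cq_succ hz 0,
    ?_, ?_⟩
  · have h := inv_lt_one_of_one_lt₀ (by linarith : 1 < -(z' - ⌊z⌋))
    rw [inv_neg] at h
    linarith
  · exact inv_lt_zero.mpr (by linarith)

lemma neg_inv_swap (h : IsReducedConj d z z') : IsReducedConj d (-z'⁻¹) (-z⁻¹) := by
  obtain ⟨hconj, hz1, hz'1, hz'0⟩ := h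
  refine ⟨(hconj.symm.inv hz'0.ne (by linarith)).neg, ?_, ?_, ?_⟩
  · rw [← inv_neg]
    exact one_lt_inv_iff₀.mpr ⟨by linarith, by linarith⟩
  · exact neg_lt_neg (inv_lt_one_of_one_lt₀ hz1)
  · exact neg_neg_of_pos (inv_pos.mpr (by linarith))

lemma exists_rat (h : IsReducedConj d z z') :
    ∃ r t : ℚ, t ≠ 0 ∧ z = r + t * √d ∧ 1 < z ∧
      -1 < (r : ℝ) - t * √d ∧ (r : ℝ) - t * √d < 0 := by
  obtain ⟨⟨r, t, rfl, rfl⟩, hz1, hz'1, hz'0⟩ := h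
  refine ⟨r, t, ?_, rfl, hz1, hz'1, hz'0⟩
  rintro rfl
  simp only [Rat.cast_zero, zero_mul, add_zero, sub_zero] at hz1 hz'0
  linarith

end IsReducedConj

noncomputable def conjCq (x s : ℝ) : ℕ → ℝ
  | 0 => s
  | n + 1 => (conjCq x s n - pq x n)⁻¹

lemma isReducedConj_cq_conjCq {d : ℕ} {x s : ℝ} (h : IsReducedConj d x s)
    (hx : Irrational x) : ∀ n, IsReducedConj d (cq x n) (conjCq x s n)
  | 0 => h
  | n + 1 => (isReducedConj_cq_conjCq h hx n).fract_inv (irrational_cq hx n)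

section Reversal

variable {x s : ℝ}

lemma floor_neg_inv_conjCq_succ (hs : ∀ n, -1 < conjCq x s n ∧ conjCq x s n < 0) (n : ℕ) :
    ⌊-(conjCq x s (n + 1))⁻¹⌋ = pq x n := by
  rw [conjCq, inv_inv, neg_sub, Int.floor_eq_iff]
  constructor <;> linarith [hs n]

lemma cq_neg_inv_conjCq (hs : ∀ n, -1 < conjCq x s n ∧ conjCq x s n < 0) (n k : ℕ) :
    cq (-(conjCq x s (n + k))⁻¹) k = -(conjCq x s n)⁻¹ := by
  refine cq_eq_of_fract_inv_eq (Y := fun n => -(conjCq x s n)⁻¹) (fun n => ?_) n k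
  rw [Int.fract, floor_neg_inv_conjCq_succ hs, conjCq, inv_inv, neg_sub, sub_sub_cancel_left,
    inv_neg]

end Reversal

theorem stmt5_general (d : ℕ) (hd2 : 2 ≤ d) (hdsf : Squarefree d)
    (r t : ℚ) (ht : t ≠ 0) (x : ℝ)
    (hx : x = (r : ℝ) + (t : ℝ) * Real.sqrt d)
    (hx1 : 1 < x)
    (hconj1 : -1 < (r : ℝ) - (t : ℝ) * Real.sqrt d)
    (hconj2 : (r : ℝ) - (t : ℝ) * Real.sqrt d < 0)
    (T : ℕ) (hT : 1 ≤ T)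
    (hper : ∀ n, pq x (n + T) = pq x n)
    (y : ℝ) (hy : y = -1 / ((r : ℝ) - (t : ℝ) * Real.sqrt d)) :
    (∃ r' t' : ℚ, t' ≠ 0 ∧ y = (r' : ℝ) + (t' : ℝ) * Real.sqrt d ∧ 1 < y ∧
      -1 < (r' : ℝ) - (t' : ℝ) * Real.sqrt d ∧ (r' : ℝ) - (t' : ℝ) * Real.sqrt d < 0)
    ∧ ∀ n : ℕ, pq y n = pq x (T - 1 - n % T) := by
  have hsd := irrational_sqrt_of_squarefree hd2 hdsf
  have hxirr : Irrational x := hx ▸ (hsd.ratCast_mul ht).ratCast_add r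
  set s := (r : ℝ) - t * √d
  have hred : IsReducedConj d x s := ⟨⟨r, t, hx, rfl⟩, hx1, hconj1, hconj2⟩
  have hspec := isReducedConj_cq_conjCq hred hxirr
  have hs : ∀ n, -1 < conjCq x s n ∧ conjCq x s n < 0 := fun n => (hspec n).2.2
  have hsT : conjCq x s T = s :=
    (cq_eq_self_of_pq_periodic hxirr hper ▸ (hspec T).1).eq_of_irrational hsd hred.1
  have hy' : y = -(conjCq x s T)⁻¹ := by rw [hy, hsT, neg_div, one_div]
  have hchain : ∀ k ≤ T, cq y k = -(conjCq x s (T - k))⁻¹ := fun k hk => by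
    rw [hy', ← cq_neg_inv_conjCq hs (T - k) k, Nat.sub_add_cancel hk]
  have hyred : IsReducedConj d y (-x⁻¹) := by
    rw [hy', hsT]
    exact hred.neg_inv_swap
  refine ⟨hyred.exists_rat, fun n => ?_⟩
  have hyT : cq y T = y := by rw [hchain T le_rfl, Nat.sub_self, hy', hsT]; rfl
  have hk : n % T < T := Nat.mod_lt n hT
  rw [pq, cq_mod_of_cq_eq_self hyT, hchain _ hk.le, ← floor_neg_inv_conjCq_succ hs,
    show T - 1 - n % T + 1 = T - n % T by omega]

/-- if `x` is a reduced quadratic irrational with purely periodic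
partial quotients of minimal period `T`, then `y = -1/x*` is a reduced quadratic
irrational whose partial quotients are the reversed period:
`b_n = a_{(T-1-n) mod T}` (note `(T-1-n) mod T = T-1-(n mod T)`). -/
theorem stmt5 (d : ℕ) (hd2 : 2 ≤ d) (hdsf : Squarefree d)
    (r t : ℚ) (ht : t ≠ 0) (x : ℝ)
    (hx : x = (r : ℝ) + (t : ℝ) * Real.sqrt d)
    (hx1 : 1 < x)
    (hconj1 : -1 < (r : ℝ) - (t : ℝ) * Real.sqrt d)
    (hconj2 : (r : ℝ) - (t : ℝ) * Real.sqrt d < 0)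
    (T : ℕ) (hT : 1 ≤ T)
    (hper : ∀ n, pq x (n + T) = pq x n)
    (hmin : ∀ T', 1 ≤ T' → (∀ n, pq x (n + T') = pq x n) → T ≤ T')
    (y : ℝ) (hy : y = -1 / ((r : ℝ) - (t : ℝ) * Real.sqrt d)) :
    (∃ r' t' : ℚ, t' ≠ 0 ∧ y = (r' : ℝ) + (t' : ℝ) * Real.sqrt d ∧ 1 < y ∧
      -1 < (r' : ℝ) - (t' : ℝ) * Real.sqrt d ∧ (r' : ℝ) - (t' : ℝ) * Real.sqrt d < 0)
    ∧ ∀ n : ℕ, pq y n = pq x (T - 1 - n % T) :=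
  stmt5_general d hd2 hdsf r t ht x hx hx1 hconj1 hconj2 T hT hper y hy
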